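/- Let G be a finite simple graph whose edge set carries a linear order, let e be the minimum edge of G, and let Y be a subset of the edge set of the contracted graph G|_e. If Y includes no broken circuit of G|_e, then Y ∪ {e} includes no broken circuit of G. -/

import Mathlib

attribute [-instance] Sym2.instPartialOrder

open SimpleGraph

/-- `B` is a broken circuit of the simple graph `G` (whose edges are compared via the
linear order on `Sym2 V`): `B` is obtained from the edge set of a cycle of `G` by
removing its maximum edge. -/
def IsBrokenCircuit {V : Type*} [LinearOrder (Sym2 V)] (G : SimpleGraph V)
    (B : Set (Sym2 V)) : Prop :=
  ∃ (u : V) (w : G.Walk u u), w.IsCycle ∧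
    ∃ fm ∈ w.edges, (∀ g ∈ w.edges, g ≤ fm) ∧ B = {g | g ∈ w.edges} \ {fm}

/-- `{e, f, h}` is the edge set of a triangle in `G`. -/
def IsTriangleEdges {V : Type*} (G : SimpleGraph V) (e f h : Sym2 V) : Prop :=
  ∃ x y z : V, G.Adj x y ∧ G.Adj y z ∧ G.Adj z x ∧
    e = s(x, y) ∧ f = s(y, z) ∧ h = s(z, x)

/-- The vertex map contracting the edge `s(a, b)`: it identifies `b` with `a`. -/
def contractMap {V : Type*} [DecidableEq V] (a b : V) : V → V :=
  fun v => if v = b then a else v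

/-- The simple graph obtained from `G` by contracting the edge `s(a, b)`
(identifying `b` with `a`); parallel edges arising from the contraction are merged. -/
def contractGraph {V : Type*} [DecidableEq V] (G : SimpleGraph V) (a b : V) :
    SimpleGraph V where
  Adj x y := x ≠ y ∧ ∃ f ∈ G.edgeSet, f ≠ s(a, b) ∧
    Sym2.map (contractMap a b) f = s(x, y)
  symm := by
    constructor
    rintro x y ⟨hxy, f, hf, hfe, hmap⟩
    exact ⟨hxy.symm, f, hf, hfe, by rw [hmap, Sym2.eq_swap]⟩
  loopless := by constructor; rintro x ⟨h, -⟩; exact h rfl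

/-- `f` belongs to the edge set of `G|ₑ` (for `e = s(a, b)`), viewed as a subset of
the edge set of `G`: `f` is an edge of `G` other than `e` and there is no edge `h > f`
such that `{e, f, h}` is the edge set of a triangle in `G` (i.e. `f` is the maximum
edge in its parallel class after contraction of `e`). -/
def IsContractEdge {V : Type*} [LinearOrder (Sym2 V)] (G : SimpleGraph V)
    (e f : Sym2 V) : Prop :=
  f ∈ G.edgeSet ∧ f ≠ e ∧ ∀ h : Sym2 V, f < h → ¬ IsTriangleEdges G e f h

/-- `B` is a broken circuit of the contraction `G|ₑ` (with `e = s(a, b)`), expressed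
via the identification of the edge set of `G|ₑ` with a subset of the edge set of `G`:
there is a cycle `w` of the contracted simple graph such that, with
`S ⊆ E(G)` the set of representatives of the edges of `w`, `B = S \ {max S}`. -/
def IsContractBrokenCircuit {V : Type*} [DecidableEq V] [LinearOrder (Sym2 V)]
    (G : SimpleGraph V) (a b : V) (B : Set (Sym2 V)) : Prop :=
  ∃ (u : V) (w : (contractGraph G a b).Walk u u), w.IsCycle ∧
    ∃ S : Set (Sym2 V),
      (∀ f, f ∈ S ↔ IsContractEdge G s(a, b) f ∧
        Sym2.map (contractMap a b) f ∈ w.edges) ∧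
      ∃ fm ∈ S, (∀ g ∈ S, g ≤ fm) ∧ B = S \ {fm}

set_option linter.unusedSectionVars false

section Aux
variable {V : Type*} [DecidableEq V] {G : SimpleGraph V} {a b : V}

lemma sym2_exists_eq (f : Sym2 V) : ∃ c d, f = s(c, d) :=
  Sym2.ind (fun c d => ⟨c, d, rfl⟩) f

lemma contractMap_apply_b : contractMap a b b = a := if_pos rfl

lemma contractMap_apply_ne {x : V} (h : x ≠ b) : contractMap a b x = x := if_neg h

lemma contractMap_eq_cases {x y : V} (h : contractMap a b x = contractMap a b y) :
    x = y ∨ (x = a ∧ y = b) ∨ (x = b ∧ y = a) := by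
  unfold contractMap at h
  split_ifs at h with h1 h2 h2
  · exact Or.inl (h1.trans h2.symm)
  · exact Or.inr (Or.inr ⟨h1, h.symm⟩)
  · exact Or.inr (Or.inl ⟨h, h2⟩)
  · exact Or.inl h

lemma sym2_map_eq_pair (hab : a ≠ b) {f : Sym2 V} {z : V} (hza : z ≠ a) (hzb : z ≠ b)
    (h : Sym2.map (contractMap a b) f = s(a, z)) : f = s(a, z) ∨ f = s(b, z) := by
  obtain ⟨c, d, rfl⟩ := sym2_exists_eq f
  rw [Sym2.map_pair_eq, Sym2.eq_iff] at h
  simp only [Sym2.eq_iff]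
  unfold contractMap at h
  split_ifs at h <;> aesop

lemma parallel_core (hab : a ≠ b) {c d p q : V} (hcd : c ≠ d) (hpq : p ≠ q)
    (hne : s(c, d) ≠ s(p, q)) (e1 : contractMap a b c = contractMap a b p)
    (e2 : contractMap a b d = contractMap a b q) :
    ∃ z, z ≠ a ∧ z ≠ b ∧ ((s(c, d) = s(a, z) ∧ s(p, q) = s(b, z)) ∨
      (s(c, d) = s(b, z) ∧ s(p, q) = s(a, z))) := by
  simp only [ne_eq, Sym2.eq_iff] at hne ⊢
  rcases contractMap_eq_cases e1 with h1 | ⟨rfl, rfl⟩ | ⟨rfl, rfl⟩ <;>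
    rcases contractMap_eq_cases e2 with h2 | ⟨rfl, rfl⟩ | ⟨rfl, rfl⟩ <;>
    subst_vars
  all_goals try aesop
  · exact ⟨q, fun h => hcd h.symm, fun h => hpq h.symm, Or.inl ⟨Or.inl rfl, Or.inl rfl⟩⟩
  · exact ⟨q, fun h => hpq h.symm, fun h => hcd h.symm, Or.inr ⟨Or.inl rfl, Or.inl rfl⟩⟩

lemma parallel_shape (hab : a ≠ b) {c d p q : V} (hcd : c ≠ d) (hpq : p ≠ q)
    (hne : s(c, d) ≠ s(p, q))
    (him : Sym2.map (contractMap a b) s(c, d) = Sym2.map (contractMap a b) s(p, q)) :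
    ∃ z, z ≠ a ∧ z ≠ b ∧ ((s(c, d) = s(a, z) ∧ s(p, q) = s(b, z)) ∨
      (s(c, d) = s(b, z) ∧ s(p, q) = s(a, z))) := by
  rw [Sym2.map_pair_eq, Sym2.map_pair_eq, Sym2.eq_iff] at him
  rcases him with ⟨e1, e2⟩ | ⟨e1, e2⟩
  · exact parallel_core hab hcd hpq hne e1 e2
  · have hne' : s(c, d) ≠ s(q, p) := by rwa [show s(q, p) = s(p, q) from Sym2.eq_swap]
    obtain ⟨z, h1, h2, h3⟩ := parallel_core hab hcd hpq.symm hne' e1 e2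
    rw [show s(q, p) = s(p, q) from Sym2.eq_swap] at h3
    exact ⟨z, h1, h2, h3⟩


lemma parallel_triangle (hadj : G.Adj a b) {f g : Sym2 V} (hf : f ∈ G.edgeSet)
    (hg : g ∈ G.edgeSet) (hfg : f ≠ g)
    (him : Sym2.map (contractMap a b) f = Sym2.map (contractMap a b) g) :
    IsTriangleEdges G s(a, b) f g := by
  obtain ⟨c, d, rfl⟩ := sym2_exists_eq f
  obtain ⟨p, q, rfl⟩ := sym2_exists_eq g
  have hcd : G.Adj c d := (G.mem_edgeSet).1 hf
  have hpq : G.Adj p q := (G.mem_edgeSet).1 hg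
  obtain ⟨z, hza, hzb, hsh⟩ := parallel_shape hadj.ne hcd.ne hpq.ne hfg him
  rcases hsh with ⟨h1, h2⟩ | ⟨h1, h2⟩
  · have haz : G.Adj a z := (G.mem_edgeSet).1 (h1 ▸ hf)
    have hbz : G.Adj b z := (G.mem_edgeSet).1 (h2 ▸ hg)
    exact ⟨b, a, z, hadj.symm, haz, hbz.symm, Sym2.eq_swap, h1, h2.trans Sym2.eq_swap⟩
  · have hbz : G.Adj b z := (G.mem_edgeSet).1 (h1 ▸ hf)
    have haz : G.Adj a z := (G.mem_edgeSet).1 (h2 ▸ hg)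
    exact ⟨a, b, z, hadj, hbz, haz.symm, rfl, h1, h2.trans Sym2.eq_swap⟩

lemma triangle_shape (hab : a ≠ b) {g h : Sym2 V} (ht : IsTriangleEdges G s(a, b) g h) :
    ∃ z, z ≠ a ∧ z ≠ b ∧ G.Adj a z ∧ G.Adj b z ∧
      ((g = s(a, z) ∧ h = s(b, z)) ∨ (g = s(b, z) ∧ h = s(a, z))) := by
  obtain ⟨x, y, z, hxy, hyz, hzx, hexy, hgyz, hhzx⟩ := ht
  rcases Sym2.eq_iff.1 hexy with ⟨rfl, rfl⟩ | ⟨rfl, rfl⟩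
  · exact ⟨z, fun hz => hzx.ne hz, fun hz => hyz.ne' hz, hzx.symm, hyz,
      Or.inr ⟨hgyz, hhzx.trans Sym2.eq_swap⟩⟩
  · exact ⟨z, fun hz => hyz.ne' hz, fun hz => hzx.ne hz, hyz, hzx.symm,
      Or.inl ⟨hgyz, hhzx.trans Sym2.eq_swap⟩⟩

variable [LinearOrder (Sym2 V)]

lemma contract_rep_unique (hadj : G.Adj a b) {r1 r2 : Sym2 V}
    (h1 : IsContractEdge G s(a, b) r1) (h2 : IsContractEdge G s(a, b) r2)
    (him : Sym2.map (contractMap a b) r1 = Sym2.map (contractMap a b) r2) : r1 = r2 := by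
  by_contra hne
  rcases Ne.lt_or_gt hne with hlt | hlt
  · exact h1.2.2 r2 hlt (parallel_triangle hadj h1.1 h2.1 hne him)
  · exact h2.2.2 r1 hlt (parallel_triangle hadj h2.1 h1.1 (Ne.symm hne) him.symm)

lemma contract_rep_exists (hadj : G.Adj a b) {g : Sym2 V}
    (hg : g ∈ G.edgeSet) (hge : g ≠ s(a, b)) :
    ∃ r, IsContractEdge G s(a, b) r ∧
      Sym2.map (contractMap a b) r = Sym2.map (contractMap a b) g ∧ g ≤ r := by
  by_cases hc : IsContractEdge G s(a, b) g
  · exact ⟨g, hc, rfl, le_rfl⟩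
  · have hex : ∃ h, g < h ∧ IsTriangleEdges G s(a, b) g h := by
      by_contra hno
      push_neg at hno
      exact hc ⟨hg, hge, fun h hlt ht => hno h hlt ht⟩
    obtain ⟨h, hlt, ht⟩ := hex
    obtain ⟨z, hza, hzb, haz, hbz, hsh⟩ := triangle_shape hadj.ne ht
    have hmaps : Sym2.map (contractMap a b) h = Sym2.map (contractMap a b) g := by
      rcases hsh with ⟨hg1, rfl⟩ | ⟨hg1, rfl⟩ <;> subst hg1 <;>
        simp only [Sym2.map_pair_eq, contractMap_apply_b,
          contractMap_apply_ne hadj.ne, contractMap_apply_ne hza,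
          contractMap_apply_ne hzb] <;> exact Sym2.eq_swap ▸ rfl
    refine ⟨h, ⟨?_, ?_, ?_⟩, hmaps, hlt.le⟩
    · rcases hsh with ⟨_, rfl⟩ | ⟨_, rfl⟩
      · exact (G.mem_edgeSet).2 hbz
      · exact (G.mem_edgeSet).2 haz
    · rcases hsh with ⟨_, rfl⟩ | ⟨_, rfl⟩ <;>
        { rw [Ne, Sym2.eq_iff]; rintro (⟨h1, h2⟩ | ⟨h1, h2⟩) <;> simp_all }
    · intro h' hlt' ht'
      obtain ⟨z', hz'a, hz'b, haz', hbz', hsh'⟩ := triangle_shape hadj.ne ht'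
      rcases hsh with ⟨hg1, hh1⟩ | ⟨hg1, hh1⟩ <;> rcases hsh' with ⟨hh2, hh'2⟩ | ⟨hh2, hh'2⟩
      · -- h = s(b,z) and h = s(a,z'): impossible
        rw [hh1, Sym2.eq_iff] at hh2
        rcases hh2 with ⟨rfl, rfl⟩ | ⟨rfl, rfl⟩ <;> simp_all
      · -- h = s(b,z), h = s(b,z'): z = z', h' = s(a,z) = g
        rw [hh1, Sym2.eq_iff] at hh2
        rcases hh2 with ⟨-, rfl⟩ | ⟨rfl, rfl⟩
        · rw [hh'2, ← hg1] at hlt'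
          exact absurd (hlt.trans hlt') (lt_irrefl g)
        · exact hzb rfl
      · rw [hh1, Sym2.eq_iff] at hh2
        rcases hh2 with ⟨-, rfl⟩ | ⟨rfl, rfl⟩
        · rw [hh'2, ← hg1] at hlt'
          exact absurd (hlt.trans hlt') (lt_irrefl g)
        · exact hza rfl
      · rw [hh1, Sym2.eq_iff] at hh2
        rcases hh2 with ⟨rfl, rfl⟩ | ⟨rfl, rfl⟩ <;> simp_all


lemma S_analysis (hadj : G.Adj a b) {Y : Set (Sym2 V)}
    (hY : Y ⊆ {f | IsContractEdge G s(a, b) f})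
    {u : V} {w : (contractGraph G a b).Walk u u} (hw : w.IsCycle)
    {L : List (Sym2 V)} (hL : w.edges = L.map (Sym2.map (contractMap a b)))
    (hLne : L ≠ [])
    {fm : Sym2 V}
    (hmem : ∀ f ∈ L, f ∈ G.edgeSet ∧ f ≠ s(a, b) ∧ f ≤ fm ∧ (f ≠ fm → f ∈ Y)) :
    ∃ B, IsContractBrokenCircuit G a b B ∧ B ⊆ Y := by
  classical
  set π := contractMap a b with hπ
  set S : Set (Sym2 V) :=
    {f | IsContractEdge G s(a, b) f ∧ Sym2.map π f ∈ w.edges} with hS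
  have hrepS : ∀ s ∈ S, ∃ g ∈ L, Sym2.map π s = Sym2.map π g := by
    intro s hs
    obtain ⟨-, hsim⟩ := hs
    rw [hL] at hsim
    obtain ⟨g, hgL, hgim⟩ := List.mem_map.1 hsim
    exact ⟨g, hgL, hgim.symm⟩
  by_cases hfmL : fm ∈ L
  · obtain ⟨r, hr, hrim, hrge⟩ := contract_rep_exists hadj (hmem fm hfmL).1 (hmem fm hfmL).2.1
    have hrS : r ∈ S := ⟨hr, by rw [hL, hrim]; exact List.mem_map_of_mem hfmL⟩
    have key : ∀ s ∈ S, s ≠ r → s ∈ Y ∧ s ≤ fm := by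
      intro s hs hsr
      obtain ⟨g, hgL, hgim⟩ := hrepS s hs
      by_cases hgfm : g = fm
      · exact absurd (contract_rep_unique hadj hs.1 hr
          (hgim.trans (by rw [hgfm, ← hrim]))) hsr
      · have hgY : g ∈ Y := (hmem g hgL).2.2.2 hgfm
        have hsg : s = g := contract_rep_unique hadj hs.1 (hY hgY) hgim
        exact hsg ▸ ⟨hgY, (hmem g hgL).2.2.1⟩
    refine ⟨S \ {r}, ⟨u, w, hw, S, fun f => Iff.rfl, r, hrS, ?_, rfl⟩, ?_⟩
    · intro s hs
      by_cases hsr : s = r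
      · exact hsr.le
      · exact ((key s hs hsr).2).trans hrge
    · rintro s ⟨hs, hsr⟩
      exact (key s hs (by simpa using hsr)).1
  · have hiff : ∀ s, s ∈ S ↔ s ∈ L := by
      intro s
      constructor
      · intro hs
        obtain ⟨g, hgL, hgim⟩ := hrepS s hs
        have hgY : g ∈ Y := (hmem g hgL).2.2.2 (fun h => hfmL (h ▸ hgL))
        rwa [contract_rep_unique hadj hs.1 (hY hgY) hgim]
      · intro hsL
        have hsY : s ∈ Y := (hmem s hsL).2.2.2 (fun h => hfmL (h ▸ hsL))
        exact ⟨hY hsY, by rw [hL]; exact List.mem_map_of_mem hsL⟩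
    obtain ⟨x, hx⟩ := List.exists_mem_of_ne_nil L hLne
    have hTne : L.toFinset.Nonempty := ⟨x, List.mem_toFinset.2 hx⟩
    set fm' := L.toFinset.max' hTne with hfm'
    have hfm'L : fm' ∈ L := List.mem_toFinset.1 (L.toFinset.max'_mem hTne)
    refine ⟨S \ {fm'}, ⟨u, w, hw, S, fun f => Iff.rfl, fm', (hiff fm').2 hfm'L,
      fun s hs => L.toFinset.le_max' s (List.mem_toFinset.2 ((hiff s).1 hs)), rfl⟩, ?_⟩
    rintro s ⟨hs, -⟩
    have hsL := (hiff s).1 hs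
    exact (hmem s hsL).2.2.2 (fun h => hfmL (h ▸ hsL))


def contractHom (G : SimpleGraph V) (a b : V) :
    G.deleteEdges {s(a, b)} →g contractGraph G a b where
  toFun := contractMap a b
  map_rel' := by
    intro x y hxy
    rw [deleteEdges_adj] at hxy
    obtain ⟨hadj, hne⟩ := hxy
    rw [Set.mem_singleton_iff] at hne
    refine ⟨?_, s(x, y), (G.mem_edgeSet).2 hadj, hne, Sym2.map_pair_eq _ _ _⟩
    intro h
    rcases contractMap_eq_cases h with h' | ⟨rfl, rfl⟩ | ⟨rfl, rfl⟩
    · exact hadj.ne h'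
    · exact hne rfl
    · exact hne Sym2.eq_swap

@[simp] lemma contractHom_coe : ⇑(contractHom G a b) = contractMap a b := rfl

lemma map_isPath_injOn {G' : SimpleGraph V} (F : G →g G') {x y : V} {p : G.Walk x y}
    (hp : p.IsPath) (hinj : ∀ c ∈ p.support, ∀ d ∈ p.support, F c = F d → c = d) :
    (p.map F).IsPath := by
  rw [Walk.isPath_def, Walk.support_map]
  exact List.Nodup.map_on hinj hp.support_nodup

lemma path_head_edge {x y : V} {p : G.Walk x y} (hp : p.IsPath) {f : Sym2 V}
    (hf : f ∈ p.edges) (hx : x ∈ f) :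
    ∃ (z : V) (h : G.Adj x z) (q : G.Walk z y), p = Walk.cons h q ∧ f = s(x, z) := by
  cases p with
  | nil => simp at hf
  | cons h q =>
    refine ⟨_, h, q, rfl, ?_⟩
    rw [Walk.edges_cons] at hf
    rcases List.mem_cons.1 hf with rfl | hf'
    · rfl
    · exfalso
      obtain ⟨c, d, rfl⟩ := sym2_exists_eq f
      have hxq : x ∈ q.support := by
        rcases Sym2.mem_iff.1 hx with rfl | rfl
        · exact q.fst_mem_support_of_mem_edges hf'
        · exact q.snd_mem_support_of_mem_edges hf'
      exact ((Walk.cons_isPath_iff h q).1 hp).2 hxq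

lemma build_cycle (hadj : G.Adj a b) {p : G.Walk b a} (hp : p.IsPath)
    (hpe : s(a, b) ∉ p.edges)
    (hpar : ∀ z, s(a, z) ∈ p.edges → s(b, z) ∈ p.edges → False) :
    ∃ w : (contractGraph G a b).Walk a a, w.IsCycle ∧
      w.edges = p.edges.map (Sym2.map (contractMap a b)) := by
  obtain ⟨x, h1, q, rfl⟩ : ∃ (x : V) (h1 : G.Adj b x) (q : G.Walk x a), p = Walk.cons h1 q := by
    cases p with
    | nil => exact absurd rfl hadj.ne
    | cons h q => exact ⟨_, h, q, rfl⟩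
  have hq : q.IsPath := ((Walk.cons_isPath_iff h1 q).1 hp).1
  have hbq : b ∉ q.support := ((Walk.cons_isPath_iff h1 q).1 hp).2
  have hxb : x ≠ b := h1.ne'
  have hxa : x ≠ a := by
    rintro rfl
    have hnil : q = Walk.nil := Walk.isPath_iff_eq_nil.1 hq
    subst hnil
    simp only [Walk.edges_cons, Walk.edges_nil] at hpe
    exact hpe (List.mem_singleton.2 Sym2.eq_swap)
  by_cases hcol : s(a, x) ∈ q.edges
  · exact (hpar x (by rw [Walk.edges_cons]; exact List.mem_cons_of_mem _ hcol)
      (by rw [Walk.edges_cons]; exact List.mem_cons_self)).elim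
  · have hq_del : ∀ f ∈ q.edges, f ∉ ({s(a, b)} : Set (Sym2 V)) := by
      intro f hf hmem
      rw [Set.mem_singleton_iff] at hmem
      exact hpe (by rw [Walk.edges_cons]; exact List.mem_cons_of_mem _ (hmem ▸ hf))
    set w0 := ((q.toDeleteEdges {s(a, b)} hq_del).map (contractHom G a b)).copy
      (contractMap_apply_ne hxb) (contractMap_apply_ne hadj.ne) with hw0
    have hadj_ax : (contractGraph G a b).Adj a x := by
      refine ⟨Ne.symm hxa, s(b, x), (G.mem_edgeSet).2 h1, ?_, ?_⟩
      · rw [Ne, Sym2.eq_iff]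
        rintro (⟨h1', h2'⟩ | ⟨h1', h2'⟩) <;> simp_all
      · rw [Sym2.map_pair_eq, contractMap_apply_b, contractMap_apply_ne hxb]
    have hw0edges : w0.edges = q.edges.map (Sym2.map (contractMap a b)) := by
      erw [hw0, Walk.edges_copy, Walk.edges_map, Walk.edges_transfer, contractHom_coe]
    have hw0path : w0.IsPath := by
      erw [hw0, Walk.isPath_copy]
      apply map_isPath_injOn
      · rw [Walk.isPath_def, Walk.support_transfer]
        exact hq.support_nodup
      · intro c hc d hd hcd
        rw [Walk.support_transfer] at hc hd
        have hcb : c ≠ b := fun h => hbq (h ▸ hc)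
        have hdb : d ≠ b := fun h => hbq (h ▸ hd)
        have hcd' : contractMap a b c = contractMap a b d := hcd
        rwa [contractMap_apply_ne hcb, contractMap_apply_ne hdb] at hcd'
    have hnotmem : s(a, x) ∉ w0.edges := by
      rw [hw0edges]
      intro hmem
      obtain ⟨f, hf, hfeq⟩ := List.mem_map.1 hmem
      rcases sym2_map_eq_pair hadj.ne hxa hxb hfeq with rfl | rfl
      · exact hcol hf
      · exact hbq (q.fst_mem_support_of_mem_edges hf)
    refine ⟨Walk.cons hadj_ax w0, ?_, ?_⟩
    · rw [Walk.cons_isCycle_iff]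
      exact ⟨hw0path, hnotmem⟩
    · rw [Walk.edges_cons, hw0edges, Walk.edges_cons, List.map_cons]
      congr 1
      rw [Sym2.map_pair_eq, contractMap_apply_b, contractMap_apply_ne hxb]

lemma build_cycle2 (hadj : G.Adj a b) {u : V} {C : G.Walk u u} (hC : C.IsCycle)
    (hCe : s(a, b) ∉ C.edges)
    (hinj : ∀ c ∈ C.support, ∀ d ∈ C.support,
      contractMap a b c = contractMap a b d → c = d) :
    ∃ w : (contractGraph G a b).Walk (contractMap a b u) (contractMap a b u), w.IsCycle ∧
      w.edges = C.edges.map (Sym2.map (contractMap a b)) := by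
  obtain ⟨y, h1, q, rfl⟩ : ∃ (y : V) (h1 : G.Adj u y) (q : G.Walk y u), C = Walk.cons h1 q := by
    cases C with
    | nil => exact absurd Walk.nil_nil hC.not_nil
    | cons h q => exact ⟨_, h, q, rfl⟩
  have hq : q.IsPath := ((Walk.cons_isCycle_iff q h1).1 hC).1
  have hne_edge : s(u, y) ∉ q.edges := ((Walk.cons_isCycle_iff q h1).1 hC).2
  have huS : u ∈ (Walk.cons h1 q).support := Walk.start_mem_support _
  have hyS : y ∈ (Walk.cons h1 q).support := by
    rw [Walk.support_cons]
    exact List.mem_cons_of_mem _ q.start_mem_support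
  have hqS : ∀ c ∈ q.support, c ∈ (Walk.cons h1 q).support := by
    intro c hc
    rw [Walk.support_cons]
    exact List.mem_cons_of_mem _ hc
  have hq_del : ∀ f ∈ q.edges, f ∉ ({s(a, b)} : Set (Sym2 V)) := by
    intro f hf hmem
    rw [Set.mem_singleton_iff] at hmem
    exact hCe (by rw [Walk.edges_cons]; exact List.mem_cons_of_mem _ (hmem ▸ hf))
  set w0 := (q.toDeleteEdges {s(a, b)} hq_del).map (contractHom G a b) with hw0
  have hadj' : (contractGraph G a b).Adj (contractMap a b u) (contractMap a b y) := by
    refine ⟨?_, s(u, y), (G.mem_edgeSet).2 h1, ?_, Sym2.map_pair_eq _ _ _⟩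
    · intro hcc
      exact h1.ne (hinj u huS y hyS hcc)
    · intro h
      exact hCe (by rw [Walk.edges_cons]; exact List.mem_cons_self |> (h ▸ ·))
  have hw0edges : w0.edges = q.edges.map (Sym2.map (contractMap a b)) := by
    rw [hw0, Walk.edges_map, Walk.edges_transfer, contractHom_coe]
  have hw0path : w0.IsPath := by
    rw [hw0]
    apply map_isPath_injOn
    · rw [Walk.isPath_def, Walk.support_transfer]
      exact hq.support_nodup
    · intro c hc d hd hcd
      rw [Walk.support_transfer] at hc hd
      exact hinj c (hqS c hc) d (hqS d hd) hcd
  have hnotmem : s(contractMap a b u, contractMap a b y) ∉ w0.edges := by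
    rw [hw0edges]
    intro hmem
    obtain ⟨f, hf, hfeq⟩ := List.mem_map.1 hmem
    obtain ⟨c, d, rfl⟩ := sym2_exists_eq f
    have hcS := hqS c (q.fst_mem_support_of_mem_edges hf)
    have hdS := hqS d (q.snd_mem_support_of_mem_edges hf)
    rw [Sym2.map_pair_eq, Sym2.eq_iff] at hfeq
    have : s(c, d) = s(u, y) := by
      rcases hfeq with ⟨e1, e2⟩ | ⟨e1, e2⟩
      · rw [hinj c hcS u huS e1, hinj d hdS y hyS e2]
      · rw [hinj c hcS y hyS e1, hinj d hdS u huS e2, Sym2.eq_swap]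
    exact hne_edge (this ▸ hf)
  refine ⟨Walk.cons hadj' w0, ?_, ?_⟩
  · erw [Walk.cons_isCycle_iff]
    exact ⟨hw0path, hnotmem⟩
  · erw [Walk.edges_cons, hw0edges, Walk.edges_cons, List.map_cons, Sym2.map_pair_eq]


lemma mem_tail_of_closed {u : V} {C : G.Walk u u} (hC : ¬C.Nil) {c : V}
    (hc : c ∈ C.support) : c ∈ C.support.tail := by
  cases C with
  | nil => exact absurd Walk.nil_nil hC
  | cons h q =>
    rw [Walk.support_cons, List.tail_cons]
    rw [Walk.support_cons, List.mem_cons] at hc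
    rcases hc with rfl | hc
    · exact q.end_mem_support
    · exact hc

end Aux

/-- If `e = s(a, b)` is the minimum edge of a finite simple graph `G` and
`Y ⊆ E(G|ₑ)` includes no broken circuit of the contraction `G|ₑ`, then `Y ∪ {e}`
includes no broken circuit of `G`. -/
theorem insert_min_no_broken_circuit {V : Type*} [Fintype V] [DecidableEq V]
    [LinearOrder (Sym2 V)] (G : SimpleGraph V) (a b : V) (e : Sym2 V)
    (hab : e = s(a, b)) (he : e ∈ G.edgeSet) (hmin : ∀ f ∈ G.edgeSet, e ≤ f)
    (Y : Set (Sym2 V)) (hY : Y ⊆ {f | IsContractEdge G e f})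
    (hnb : ¬ ∃ B, IsContractBrokenCircuit G a b B ∧ B ⊆ Y) :
    ¬ ∃ B, IsBrokenCircuit G B ∧ B ⊆ Y ∪ {e} := by
  subst hab
  intro hex
  unfold IsBrokenCircuit at hex
  obtain ⟨B, ⟨u, C, hC, fm, hfmC, hfmmax, hBdef⟩, hBsub⟩ := hex
  have hadj : G.Adj a b := (G.mem_edgeSet).1 he
  have hBY : ∀ f, f ∈ C.edges → f ≠ s(a, b) → f ≠ fm → f ∈ Y := by
    intro f h1 h2 h3
    have hfB : f ∈ B := by rw [hBdef]; exact ⟨h1, h3⟩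
    rcases hBsub hfB with hY' | hE
    · exact hY'
    · exact absurd hE h2
  have hL8 : ∀ z, s(a, z) ∈ C.edges → s(b, z) ∈ C.edges → False := by
    intro z h1 h2
    have hadj1 : G.Adj a z := C.adj_of_mem_edges h1
    have hadj2 : G.Adj b z := C.adj_of_mem_edges h2
    have hzb : z ≠ b := hadj2.ne'
    have hne12 : s(a, z) ≠ s(b, z) := by
      rw [Ne, Sym2.eq_iff]
      rintro (⟨h, -⟩ | ⟨h, h'⟩)
      · exact hadj.ne h
      · exact hadj.ne (h.trans h')
    have h1e : s(a, z) ≠ s(a, b) := by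
      rw [Ne, Sym2.eq_iff]
      rintro (⟨-, h⟩ | ⟨h, -⟩)
      · exact hzb h
      · exact hadj.ne h
    have h2e : s(b, z) ≠ s(a, b) := by
      rw [Ne, Sym2.eq_iff]
      rintro (⟨h, -⟩ | ⟨-, h⟩)
      · exact hadj.ne h.symm
      · exact hadj1.ne' h
    have him : Sym2.map (contractMap a b) s(a, z) = Sym2.map (contractMap a b) s(b, z) := by
      rw [Sym2.map_pair_eq, Sym2.map_pair_eq, contractMap_apply_b,
        contractMap_apply_ne hadj.ne, contractMap_apply_ne hzb]
    rcases Ne.lt_or_gt hne12 with hlt | hlt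
    · have hYm : s(a, z) ∈ Y := hBY _ h1 h1e (ne_of_lt (lt_of_lt_of_le hlt (hfmmax _ h2)))
      exact (hY hYm).2.2 _ hlt (parallel_triangle hadj (C.edges_subset_edgeSet h1)
        (C.edges_subset_edgeSet h2) hne12 him)
    · have hYm : s(b, z) ∈ Y := hBY _ h2 h2e (ne_of_lt (lt_of_lt_of_le hlt (hfmmax _ h1)))
      exact (hY hYm).2.2 _ hlt (parallel_triangle hadj (C.edges_subset_edgeSet h2)
        (C.edges_subset_edgeSet h1) hne12.symm him.symm)
  have final : ∀ (p : G.Walk b a), p.IsPath → s(a, b) ∉ p.edges →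
      (∀ f ∈ p.edges, f ∈ C.edges) → False := by
    intro p hp hpe hsub
    obtain ⟨w, hw, hwE⟩ := build_cycle hadj hp hpe
      (fun z h1 h2 => hL8 z (hsub _ h1) (hsub _ h2))
    have hpne : p.edges ≠ [] := by
      intro h
      have hlen : p.length = 0 := by
        have := congrArg List.length h
        simpa [Walk.length_edges] using this
      exact hadj.ne' (Walk.eq_of_length_eq_zero hlen)
    refine hnb (S_analysis hadj hY hw hwE hpne (fm := fm) ?_)
    intro f hf
    exact ⟨C.edges_subset_edgeSet (hsub f hf), fun h => hpe (h ▸ hf),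
      hfmmax f (hsub f hf), fun h => hBY f (hsub f hf) (fun h' => hpe (h' ▸ hf)) h⟩
  by_cases heC : s(a, b) ∈ C.edges
  · -- Case A : e on the cycle
    have haS : a ∈ C.support := C.fst_mem_support_of_mem_edges heC
    obtain ⟨C1, hC1, hEiff⟩ : ∃ C1 : G.Walk a a, C1.IsCycle ∧
        (∀ f, f ∈ C1.edges ↔ f ∈ C.edges) :=
      ⟨C.rotate a haS, hC.rotate haS, fun f => (C.rotate_edges a haS).mem_iff⟩
    obtain ⟨y, h2, q2, rfl⟩ : ∃ (y : V) (h2 : G.Adj a y) (q2 : G.Walk y a),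
        C1 = Walk.cons h2 q2 := by
      cases C1 with
      | nil => exact absurd Walk.nil_nil hC1.not_nil
      | cons h q => exact ⟨_, h, q, rfl⟩
    have hq2 : q2.IsPath := ((Walk.cons_isCycle_iff q2 h2).1 hC1).1
    have hq2e : s(a, y) ∉ q2.edges := ((Walk.cons_isCycle_iff q2 h2).1 hC1).2
    have heC1 : s(a, b) ∈ (Walk.cons h2 q2).edges := (hEiff _).2 heC
    by_cases hee : s(a, b) = s(a, y)
    · have hyb : y = b := by
        rcases Sym2.eq_iff.1 hee with ⟨-, h⟩ | ⟨h, h'⟩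
        · exact h.symm
        · exact absurd h' hadj.ne'
      subst hyb
      exact final q2 hq2 (hee ▸ hq2e)
        (fun f hf => (hEiff f).1 (by rw [Walk.edges_cons]; exact List.mem_cons_of_mem _ hf))
    · have heq2 : s(a, b) ∈ q2.edges := by
        rcases List.mem_cons.1 (by rwa [Walk.edges_cons] at heC1) with h | h
        · exact absurd h hee
        · exact h
      have hq2r : q2.reverse.IsPath := hq2.reverse
      have her : s(a, b) ∈ q2.reverse.edges := by
        rwa [Walk.edges_reverse, List.mem_reverse]
      obtain ⟨x2, h3, q3, hdec, hfe⟩ := path_head_edge hq2r her (Sym2.mem_mk_left a b)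
      have hx2 : b = x2 := by
        rcases Sym2.eq_iff.1 hfe with ⟨-, h⟩ | ⟨-, h'⟩
        · exact h
        · exact absurd h' hadj.ne'
      subst hx2
      have hq3 : q3.IsPath ∧ a ∉ q3.support := (Walk.cons_isPath_iff h3 q3).1 (hdec ▸ hq2r)
      have hyb : y ≠ b := fun h => hee (by rw [h])
      set p := q3.append (Walk.cons h2.symm Walk.nil) with hpdef
      have hppath : p.IsPath := by
        rw [hpdef, Walk.isPath_def, Walk.support_append, Walk.support_cons,
          Walk.support_nil, List.tail_cons, List.nodup_append]
        refine ⟨hq3.1.support_nodup, List.nodup_singleton a, ?_⟩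
        intro c hc
        simp only [List.mem_singleton]
        rintro _ rfl rfl
        exact hq3.2 hc
      have htrail : (Walk.cons h3 q3).IsTrail := (hdec ▸ hq2r).isTrail
      have hq3e : s(a, b) ∉ q3.edges := ((Walk.isTrail_cons h3 q3).1 htrail).2
      have hpe : s(a, b) ∉ p.edges := by
        rw [hpdef, Walk.edges_append]
        intro hmem
        rcases List.mem_append.1 hmem with h | h
        · exact hq3e h
        · rw [Walk.edges_cons, Walk.edges_nil] at h
          have h' := List.mem_singleton.1 h
          rcases Sym2.eq_iff.1 h' with ⟨-, h2'⟩ | ⟨-, h2'⟩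
          · exact hadj.ne' h2'
          · exact hyb h2'.symm
      have hsub : ∀ f ∈ p.edges, f ∈ C.edges := by
        intro f hf
        rw [hpdef, Walk.edges_append] at hf
        rcases List.mem_append.1 hf with h | h
        · have h2' : f ∈ q2.reverse.edges := by
            rw [hdec, Walk.edges_cons]
            exact List.mem_cons_of_mem _ h
          rw [Walk.edges_reverse, List.mem_reverse] at h2'
          exact (hEiff f).1 (by rw [Walk.edges_cons]; exact List.mem_cons_of_mem _ h2')
        · rw [Walk.edges_cons, Walk.edges_nil] at h
          rw [List.mem_singleton.1 h]
          refine (hEiff _).1 ?_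
          rw [Walk.edges_cons, show s(y, a) = s(a, y) from Sym2.eq_swap]
          exact List.mem_cons_self
      exact final p hppath hpe hsub
  · by_cases habS : a ∈ C.support ∧ b ∈ C.support
    · obtain ⟨haS, hbS⟩ := habS
      obtain ⟨C1, hC1, hEiff, hbS1⟩ : ∃ C1 : G.Walk a a, C1.IsCycle ∧
          (∀ f, f ∈ C1.edges ↔ f ∈ C.edges) ∧ b ∈ C1.support := by
        refine ⟨C.rotate a haS, hC.rotate haS, fun f => (C.rotate_edges a haS).mem_iff, ?_⟩
        rw [Walk.mem_support_iff]
        right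
        rw [(C.support_rotate a haS).mem_iff]
        exact mem_tail_of_closed hC.not_nil hbS
      obtain ⟨y, h2, q2, rfl⟩ : ∃ (y : V) (h2 : G.Adj a y) (q2 : G.Walk y a),
          C1 = Walk.cons h2 q2 := by
        cases C1 with
        | nil => exact absurd Walk.nil_nil hC1.not_nil
        | cons h q => exact ⟨_, h, q, rfl⟩
      have hq2 : q2.IsPath := ((Walk.cons_isCycle_iff q2 h2).1 hC1).1
      have hb2 : b ∈ q2.support := by
        rw [Walk.support_cons, List.mem_cons] at hbS1
        rcases hbS1 with h | h
        · exact absurd h hadj.ne'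
        · exact h
      set p := q2.dropUntil b hb2 with hpdef
      have hsub0 : ∀ f ∈ p.edges, f ∈ (Walk.cons h2 q2).edges := by
        intro f hf
        rw [Walk.edges_cons]
        exact List.mem_cons_of_mem _ (q2.edges_dropUntil_subset hb2 hf)
      exact final p (hq2.dropUntil hb2) (fun h => heC ((hEiff _).1 (hsub0 _ h)))
        (fun f hf => (hEiff f).1 (hsub0 f hf))
    · have hinj : ∀ c ∈ C.support, ∀ d ∈ C.support,
          contractMap a b c = contractMap a b d → c = d := by
        intro c hc d hd hcd
        rcases contractMap_eq_cases hcd with h | ⟨rfl, rfl⟩ | ⟨rfl, rfl⟩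
        · exact h
        · exact absurd ⟨hc, hd⟩ habS
        · exact absurd ⟨hd, hc⟩ habS
      obtain ⟨w, hw, hwE⟩ := build_cycle2 hadj hC heC hinj
      have hCne : C.edges ≠ [] := by
        intro h
        have h3 := hC.three_le_length
        rw [← Walk.length_edges, h] at h3
        simp at h3
      refine hnb (S_analysis hadj hY hw hwE hCne (fm := fm) ?_)
      intro f hf
      exact ⟨C.edges_subset_edgeSet hf, fun h => heC (h ▸ hf), hfmmax f hf,
        fun h => hBY f hf (fun h' => heC (h' ▸ hf)) h⟩
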